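/- arXiv:1501.00893 — 5 statements merged into one kernel-verified Lean document; each statement's English description precedes it below -/
import Mathlib

section
/- If two closed geodesics on the flat 2-torus intersect in exactly k ≥ 1 points, then there exists a change of basis in SL(2,ℤ) (up to sign) taking their homology classes to (1,0) and (x,k), where x is an integer with 1 ≤ x ≤ k (and x ≤ k−1 when k ≥ 2), gcd(x,k) = 1, and x is uniquely determined up to the substitution x ↔ k−x. -/
noncomputable section

/-- The flat two-dimensional torus `ℝ²/ℤ²`. -/
abbrev Torus : Type := AddCircle (1 : ℝ) × AddCircle (1 : ℝ)

/-- The quotient projection `ℝ² → ℝ²/ℤ²`. -/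
def torusProj (v : ℝ × ℝ) : Torus :=
  ((v.1 : AddCircle (1 : ℝ)), (v.2 : AddCircle (1 : ℝ)))

/-- A vector `(p, q) ∈ ℤ²` is primitive if `gcd(p, q) = 1`. -/
def IsPrimitive (v : ℤ × ℤ) : Prop := Int.gcd v.1 v.2 = 1

/-- The closed geodesic on the torus through (the class of) `b` in direction `v`. -/
def geodesic (b : ℝ × ℝ) (v : ℤ × ℤ) : Set Torus :=
  Set.range (fun t : ℝ => torusProj (b.1 + t * (v.1 : ℝ), b.2 + t * (v.2 : ℝ)))

/-- The number of connected components of the complement of `S`. -/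
def regionCount {X : Type*} [TopologicalSpace X] (S : Set X) : ℕ :=
  Nat.card (ConnectedComponents ↥(Sᶜ))

/-- An arrangement of `n` distinct closed geodesics, given by base points `b`
and primitive direction vectors `v`. -/
def IsArrangement {n : ℕ} (b : Fin n → ℝ × ℝ) (v : Fin n → ℤ × ℤ) : Prop :=
  (∀ i, IsPrimitive (v i)) ∧ Function.Injective (fun i => geodesic (b i) (v i))

/-- Two geodesics are parallel iff their homology classes agree up to sign. -/
def Parallel (v w : ℤ × ℤ) : Prop := v = w ∨ v = -w

/-!
The integer matrix `(a b; -q p)` with `a p + b q = 1` acts on the torus as an automorphism that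
straightens the first geodesic into a horizontal circle and sends the second one to a geodesic of
direction `(y, D)`, `D = p s - q r`. Such a geodesic meets a horizontal circle in exactly `|D|`
points if `D ≠ 0`, and in none or infinitely many if `D = 0`; hence `|D| = k`. A shear then moves
`y` into `[1, k]`, and `(x, k)` stays primitive because the matrix is invertible over `ℤ`.
For uniqueness, reduce modulo `k`: every normalizing matrix gives `v₂ ≡ ±x v₁`, and since `v₁` is
primitive this determines `x` modulo `k` up to sign, that is, up to `x ↔ k - x`.
-/

instance {p : ℝ} [Fact (0 < p)] : Infinite (AddCircle p) :=
  (AddCircle.equivIco p 0).infinite_iff.2 (Set.Ico_infinite (by simpa using Fact.out)).to_subtype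

lemma addCircle_coe_eq_coe_iff (x y : ℝ) :
    (x : AddCircle (1 : ℝ)) = y ↔ ∃ n : ℤ, x - y = n := by
  rw [← sub_eq_zero, ← AddCircle.coe_sub, AddCircle.coe_eq_zero_iff]
  simp [eq_comm]

def torusLinearMap (a b c d : ℤ) (z : Torus) : Torus :=
  (a • z.1 + b • z.2, c • z.1 + d • z.2)

lemma torusLinearMap_torusProj (a b c d : ℤ) (u : ℝ × ℝ) :
    torusLinearMap a b c d (torusProj u) = torusProj (a * u.1 + b * u.2, c * u.1 + d * u.2) := by
  simp only [torusLinearMap, torusProj, ← AddCircle.coe_zsmul, ← AddCircle.coe_add, zsmul_eq_mul]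

lemma torusLinearMap_injective {a b c d : ℤ} (h : a * d - b * c = 1) :
    Function.Injective (torusLinearMap a b c d) := by
  refine Function.LeftInverse.injective (g := torusLinearMap d (-b) (-c) a) fun z => ?_
  ext
  · simp only [torusLinearMap]
    linear_combination (norm := module) h • z.1
  · simp only [torusLinearMap]
    linear_combination (norm := module) h • z.2

lemma image_torusLinearMap_geodesic (a b c d : ℤ) (β : ℝ × ℝ) (v : ℤ × ℤ) :
    torusLinearMap a b c d '' geodesic β v =
      geodesic (a * β.1 + b * β.2, c * β.1 + d * β.2) (a * v.1 + b * v.2, c * v.1 + d * v.2) := by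
  simp only [geodesic, ← Set.range_comp, Function.comp_def, torusLinearMap_torusProj]
  congr! 3 with t
  push_cast
  ext <;> ring

lemma geodesic_neg (β : ℝ × ℝ) (v : ℤ × ℤ) : geodesic β (-v) = geodesic β v := by
  simp only [geodesic]
  ext z
  constructor <;> rintro ⟨t, rfl⟩ <;>
    exact ⟨-t, by simp only [Prod.fst_neg, Prod.snd_neg, Int.cast_neg]; ring_nf⟩

lemma geodesic_one_zero (β : ℝ × ℝ) :
    geodesic β (1, 0) = {z : Torus | z.2 = β.2} := by
  ext ⟨z₁, z₂⟩
  simp only [geodesic, torusProj, Set.mem_range, Set.mem_ofPred_eq, Prod.mk.injEq]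
  constructor
  · rintro ⟨t, -, rfl⟩
    simp
  · rintro rfl
    obtain ⟨u, rfl⟩ := QuotientAddGroup.mk_surjective z₁
    exact ⟨u - β.1, by simp, by simp⟩

lemma torusProj_eq_torusProj_iff (u u' : ℝ × ℝ) :
    torusProj u = torusProj u' ↔ (∃ n : ℤ, u.1 - u'.1 = n) ∧ ∃ n : ℤ, u.2 - u'.2 = n := by
  simp only [torusProj, Prod.mk.injEq, addCircle_coe_eq_coe_iff]

lemma Nat.card_range_of_eq_iff_dvd_sub {α : Type*} (g : ℤ → α) {k : ℕ} (hk : k ≠ 0)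
    (hg : ∀ n m, g n = g m ↔ (k : ℤ) ∣ n - m) : Nat.card (Set.range g) = k := by
  have : NeZero k := ⟨hk⟩
  have hcast : ∀ n m : ℤ, g n = g m ↔ (n : ZMod k) = m := fun n m => by
    rw [hg, ZMod.intCast_eq_intCast_iff_dvd_sub, ← dvd_neg, neg_sub]
  let h : ZMod k → α := fun z => g z.val
  have hgh : g = h ∘ Int.cast := funext fun n => (hcast _ _).2 (by simp)
  rw [hgh, ZMod.intCast_surjective.range_comp, Nat.card_range_of_injective, Nat.card_zmod]
  intro z z' hzz
  simpa using (hcast _ _).1 hzz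

lemma card_geodesic_one_zero_inter (c b : ℝ × ℝ) {y D : ℤ} (hyD : IsCoprime y D) (hD : D ≠ 0) :
    Nat.card ↥(geodesic c (1, 0) ∩ geodesic b (y, D)) = D.natAbs := by
  have hD' : (D : ℝ) ≠ 0 := Int.cast_ne_zero.2 hD
  -- the crossings happen at the times `t n`, where `b.2 + t n * D = c.2 + n`
  set t : ℤ → ℝ := fun n => (c.2 - b.2 + n) / D
  have hrange : geodesic c (1, 0) ∩ geodesic b (y, D) =
      Set.range fun n => torusProj (b.1 + t n * y, b.2 + t n * D) := by
    rw [geodesic_one_zero]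
    ext z
    simp only [Set.mem_inter_iff, Set.mem_ofPred_eq, geodesic, Set.mem_range]
    constructor
    · rintro ⟨hz, s, rfl⟩
      obtain ⟨n, hn⟩ := (addCircle_coe_eq_coe_iff _ _).1 hz
      refine ⟨n, ?_⟩
      rw [show t n = s by simp only [t]; field_simp; linarith]
    · rintro ⟨n, rfl⟩
      refine ⟨(addCircle_coe_eq_coe_iff _ _).2 ⟨n, ?_⟩, t n, rfl⟩
      simp only [t]
      field_simp
      ring
  rw [hrange]
  refine Nat.card_range_of_eq_iff_dvd_sub _ (Int.natAbs_ne_zero.2 hD) fun n m => ?_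
  have hdiff₁ : b.1 + t n * y - (b.1 + t m * y) = (n - m) * y / D := by simp only [t]; ring
  have hdiff₂ : b.2 + t n * D - (b.2 + t m * D) = n - m := by simp only [t]; field_simp; ring
  rw [Int.natAbs_dvd, torusProj_eq_torusProj_iff, hdiff₁, hdiff₂]
  constructor
  · rintro ⟨⟨j, hj⟩, -⟩
    rw [div_eq_iff hD'] at hj
    exact hyD.symm.dvd_of_dvd_mul_right ⟨j, by rw [mul_comm D]; exact_mod_cast hj⟩
  · rintro ⟨j, hj⟩
    refine ⟨⟨j * y, ?_⟩, ⟨n - m, by push_cast; ring⟩⟩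
    rw [div_eq_iff hD']
    have hj' : (n : ℝ) - m = D * j := by exact_mod_cast hj
    rw [hj']
    push_cast
    ring

lemma card_geodesic_one_zero_inter_geodesic_one_zero (c b : ℝ × ℝ) :
    Nat.card ↥(geodesic c (1, 0) ∩ geodesic b (1, 0)) = 0 := by
  rw [geodesic_one_zero, geodesic_one_zero]
  by_cases h : (c.2 : AddCircle (1 : ℝ)) = b.2
  · rw [h, Set.inter_self]
    have : {z : Torus | z.2 = b.2}.Infinite :=
      Set.infinite_of_injective_forall_mem (f := fun w => (w, (b.2 : AddCircle (1 : ℝ))))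
        (fun _ _ hw => (Prod.ext_iff.1 hw).1) fun _ => rfl
    -- `Nat.card` of an infinite set is `0`
    rw [Nat.card_coe_set_eq, this.ncard]
  · have hempty : {z : Torus | z.2 = c.2} ∩ {z | z.2 = b.2} = ∅ :=
      Set.eq_empty_of_forall_notMem fun z hz => h (hz.1.symm.trans hz.2)
    simp [hempty]

lemma natAbs_det_eq_card_inter_geodesic (b₁ b₂ : ℝ × ℝ) {p q r s : ℤ} (hpq : IsCoprime p q)
    (hrs : IsCoprime r s) (hk : Nat.card ↥(geodesic b₁ (p, q) ∩ geodesic b₂ (r, s)) ≠ 0) :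
    (p * s - q * r).natAbs = Nat.card ↥(geodesic b₁ (p, q) ∩ geodesic b₂ (r, s)) := by
  obtain ⟨a, b, hab⟩ := hpq
  have hinj := torusLinearMap_injective (a := a) (b := b) (c := -q) (d := p)
    (by linear_combination hab)
  rw [← Nat.card_image_of_injective hinj, Set.image_inter hinj, image_torusLinearMap_geodesic,
    image_torusLinearMap_geodesic] at hk ⊢
  dsimp only at hk ⊢
  rw [show (a * p + b * q, -q * p + p * q) = ((1 : ℤ), (0 : ℤ)) from Prod.ext hab (by ring),
    show -q * r + p * s = p * s - q * r by ring] at hk ⊢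
  set D := p * s - q * r
  set y := a * r + b * s
  have hyD : IsCoprime y D := by
    obtain ⟨u, v, huv⟩ := hrs
    exact ⟨u * p + v * q, -u * b + v * a, by linear_combination (u * r + v * s) * hab + huv⟩
  by_cases hD : D = 0
  · refine absurd ?_ hk
    rcases Int.isUnit_iff.1 (isCoprime_zero_right.1 (hD ▸ hyD)) with hy | hy
    · rw [hD, hy]
      exact card_geodesic_one_zero_inter_geodesic_one_zero _ _
    · rw [hD, hy, show ((-1 : ℤ), (0 : ℤ)) = -(1, 0) by simp, geodesic_neg]
      exact card_geodesic_one_zero_inter_geodesic_one_zero _ _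
  · exact (card_geodesic_one_zero_inter _ _ hyD hD).symm

open Matrix

section CommRing

variable {R : Type*} [CommRing R]

namespace Matrix

lemma eq_smul_of_mulVec_eq_smul_mulVec {n : Type*} [Fintype n] [DecidableEq n]
    {A : Matrix n n R} (hA : IsUnit A.det) {v w : n → R} {c : R}
    (h : A *ᵥ w = c • A *ᵥ v) : w = c • v :=
  mulVec_injective_of_isUnit ((isUnit_iff_isUnit_det A).2 hA) (by rwa [mulVec_smul])

lemma isCoprime_of_isCoprime_mulVec (B : Matrix (Fin 2) (Fin 2) R) {z : Fin 2 → R}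
    (h : IsCoprime ((B *ᵥ z) 0) ((B *ᵥ z) 1)) : IsCoprime (z 0) (z 1) := by
  obtain ⟨u, v, huv⟩ := h
  simp only [mulVec, dotProduct, Fin.sum_univ_two] at huv
  exact ⟨u * B 0 0 + v * B 1 0, u * B 0 1 + v * B 1 1, by linear_combination huv⟩

end Matrix

lemma eq_of_smul_eq_smul_of_isCoprime {v : Fin 2 → R}
    (hv : IsCoprime (v 0) (v 1)) {c c' : R} (h : c • v = c' • v) : c = c' := by
  obtain ⟨a, b, hab⟩ := hv
  have h0 := congrFun h 0
  have h1 := congrFun h 1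
  simp only [Pi.smul_apply, smul_eq_mul] at h0 h1
  linear_combination a * h0 + b * h1 - (c - c') * hab

end CommRing

lemma isCoprime_of_mulVec_eq_smul {A : Matrix (Fin 2) (Fin 2) ℤ} (hA : IsUnit A.det)
    {w : Fin 2 → ℤ} (hw : IsCoprime (w 0) (w 1)) {e : ℤˣ} {x y : ℤ}
    (hAw : A *ᵥ w = (e : ℤ) • ![x, y]) : IsCoprime x y := by
  have hinv : A⁻¹ *ᵥ (A *ᵥ w) = w := by rw [mulVec_mulVec, nonsing_inv_mul _ hA, one_mulVec]
  rw [← hinv] at hw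
  have := Matrix.isCoprime_of_isCoprime_mulVec A⁻¹ hw
  rw [hAw] at this
  simpa [isCoprime_mul_unit_left e.isUnit] using this

lemma intCast_comp_eq_smul_of_mulVec (k : ℕ) {A : Matrix (Fin 2) (Fin 2) ℤ} (hA : IsUnit A.det)
    {v w : Fin 2 → ℤ} {e₁ e₂ : ℤˣ} {x : ℤ}
    (hv : A *ᵥ v = (e₁ : ℤ) • ![1, 0]) (hw : A *ᵥ w = (e₂ : ℤ) • ![x, (k : ℤ)]) :
    (Int.cast ∘ w : Fin 2 → ZMod k) = (((e₁ * e₂ : ℤˣ) * x : ℤ) : ZMod k) • (Int.cast ∘ v) := by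
  let f := Int.castRingHom (ZMod k)
  have hAf : IsUnit (A.map f).det := by
    rw [show (A.map f).det = (f.mapMatrix A).det from rfl, ← RingHom.map_det]
    exact hA.map f
  refine Matrix.eq_smul_of_mulVec_eq_smul_mulVec hAf ?_
  have he : f e₁ * f e₁ = 1 := by rw [← map_mul, Int.isUnit_mul_self e₁.isUnit, map_one]
  ext i
  change (A.map f *ᵥ (f ∘ w)) i = f ((e₁ * e₂ : ℤˣ) * x) * (A.map f *ᵥ (f ∘ v)) i
  rw [← f.map_mulVec, ← f.map_mulVec, hw, hv, smul_vec2, smul_vec2]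
  fin_cases i
  · simp only [Fin.zero_eta, cons_val_zero, smul_eq_mul, mul_one, map_mul, Units.val_mul]
    linear_combination (-f e₂ * f x) * he
  · simp [f]

lemma dvd_sub_or_dvd_add_of_mulVec (k : ℕ) {A A' : Matrix (Fin 2) (Fin 2) ℤ}
    (hA : IsUnit A.det) (hA' : IsUnit A'.det) {v w : Fin 2 → ℤ} (hv : IsCoprime (v 0) (v 1))
    {e₁ e₂ e₁' e₂' : ℤˣ} {x x' : ℤ}
    (hAv : A *ᵥ v = (e₁ : ℤ) • ![1, 0]) (hAw : A *ᵥ w = (e₂ : ℤ) • ![x, (k : ℤ)])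
    (hA'v : A' *ᵥ v = (e₁' : ℤ) • ![1, 0]) (hA'w : A' *ᵥ w = (e₂' : ℤ) • ![x', (k : ℤ)]) :
    (k : ℤ) ∣ x' - x ∨ (k : ℤ) ∣ x' + x := by
  have h := eq_of_smul_eq_smul_of_isCoprime (hv.map (Int.castRingHom (ZMod k)))
    ((intCast_comp_eq_smul_of_mulVec k hA hAv hAw).symm.trans
      (intCast_comp_eq_smul_of_mulVec k hA' hA'v hA'w))
  rw [ZMod.intCast_eq_intCast_iff_dvd_sub] at h
  rcases Int.units_eq_one_or (e₁ * e₂) with hσ | hσ <;>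
    rcases Int.units_eq_one_or (e₁' * e₂') with hσ' | hσ' <;>
    simp only [hσ, hσ', Units.val_one, Units.val_neg, one_mul, neg_one_mul] at h
  · exact Or.inl h
  · exact Or.inr (dvd_neg.1 (by rwa [neg_add']))
  · exact Or.inr (by simpa using h)
  · exact Or.inl (dvd_neg.1 (by rwa [neg_sub']))

lemma eq_or_eq_sub_of_dvd {k x x' : ℤ} (hx : 1 ≤ x) (hxk : x ≤ k) (hx' : 1 ≤ x') (hx'k : x' ≤ k)
    (h : k ∣ x' - x ∨ k ∣ x' + x) : x' = x ∨ x' = k - x := by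
  rcases h with h | h
  · have := Int.eq_zero_of_abs_lt_dvd h (abs_lt.2 ⟨by omega, by omega⟩)
    omega
  · by_cases hkk : x' + x = 2 * k
    · omega
    · have := Int.eq_zero_of_abs_lt_dvd (dvd_sub h dvd_rfl) (abs_lt.2 ⟨by omega, by omega⟩)
      omega

lemma exists_det_eq_one_mulVec_eq (p q r s : ℤ) (hpq : IsCoprime p q) :
    ∃ y : ℤ, ∀ t : ℤ, ∃ A : Matrix (Fin 2) (Fin 2) ℤ, A.det = 1 ∧ A *ᵥ ![p, q] = ![1, 0] ∧
      A *ᵥ ![r, s] = ![y - t * (p * s - q * r), p * s - q * r] := by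
  obtain ⟨a, b, hab⟩ := hpq
  refine ⟨a * r + b * s, fun t => ⟨!![a + t * q, b - t * p; -q, p], ?_, ?_, ?_⟩⟩
  · rw [det_fin_two_of]
    linear_combination hab
  all_goals simp only [mulVec_fin_two, of_apply, cons_val_zero, cons_val_one, cons_val_fin_one]
  · exact vec2_eq (by linear_combination hab) (by ring)
  · exact vec2_eq (by ring) (by ring)

lemma exists_mulVec_eq_smul_of_natAbs_eq {p q r s : ℤ} (hpq : IsCoprime p q) {k : ℕ} (hk : 0 < k)
    (hD : (p * s - q * r).natAbs = k) :
    ∃ (A : Matrix (Fin 2) (Fin 2) ℤ) (x : ℤ) (e : ℤˣ), A.det = 1 ∧ A *ᵥ ![p, q] = ![1, 0] ∧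
      A *ᵥ ![r, s] = (e : ℤ) • ![x, (k : ℤ)] ∧ 1 ≤ x ∧ x ≤ k := by
  obtain ⟨e, he⟩ : ∃ e : ℤˣ, p * s - q * r = e * k := by
    rcases Int.natAbs_eq (p * s - q * r) with h | h
    · exact ⟨1, by rw [h, hD]; simp⟩
    · exact ⟨-1, by rw [h, hD]; simp⟩
  obtain ⟨y, hy⟩ := exists_det_eq_one_mulVec_eq p q r s hpq
  have hkz : (0 : ℤ) < k := by exact_mod_cast hk
  -- `x` is the representative of `e * y` modulo `k` in `[1, k]`, and `t` the matching shear
  set t := (e * y - 1) / k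
  set x := (e * y - 1) % k + 1 with hx
  obtain ⟨A, hdet, hv, hw⟩ := hy t
  refine ⟨A, x, e, hdet, hv, ?_, ?_, ?_⟩
  · have hxt : x = e * y - k * t := by rw [hx, Int.emod_def]; ring
    rw [hw, he, smul_vec2, smul_eq_mul, smul_eq_mul]
    exact vec2_eq (by linear_combination (-e) * hxt - y * Int.isUnit_mul_self e.isUnit) rfl
  · have := Int.emod_nonneg (e * y - 1) hkz.ne'
    omega
  · have := Int.emod_lt_of_pos (e * y - 1) hkz
    omega

/-- If two geodesics intersect in exactly `k ≥ 1` points, a basis change in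
`GL(2,ℤ)` takes their classes (up to sign) to `(1,0)` and `(x,k)` with
`1 ≤ x ≤ k`, `x ≤ k-1` when `k ≥ 2`, `gcd(x,k) = 1`, and `x` unique up to `x ↔ k-x`. -/
theorem stmt4 (b₁ b₂ : ℝ × ℝ) (v₁ v₂ : ℤ × ℤ)
    (h1 : IsPrimitive v₁) (h2 : IsPrimitive v₂) (k : ℕ) (hk : 1 ≤ k)
    (hcard : Nat.card ↥(geodesic b₁ v₁ ∩ geodesic b₂ v₂) = k) :
    ∃ (A : Matrix (Fin 2) (Fin 2) ℤ) (x : ℤ) (e₁ e₂ : ℤˣ),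
      (A.det = 1 ∨ A.det = -1) ∧
      A.mulVec ![v₁.1, v₁.2] = (e₁ : ℤ) • ![1, 0] ∧
      A.mulVec ![v₂.1, v₂.2] = (e₂ : ℤ) • ![x, (k : ℤ)] ∧
      1 ≤ x ∧ x ≤ (k : ℤ) ∧ (2 ≤ k → x ≤ (k : ℤ) - 1) ∧ Int.gcd x k = 1 ∧
      ∀ (A' : Matrix (Fin 2) (Fin 2) ℤ) (x' : ℤ) (e₁' e₂' : ℤˣ),
        (A'.det = 1 ∨ A'.det = -1) →
        A'.mulVec ![v₁.1, v₁.2] = (e₁' : ℤ) • ![1, 0] →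
        A'.mulVec ![v₂.1, v₂.2] = (e₂' : ℤ) • ![x', (k : ℤ)] →
        1 ≤ x' → x' ≤ (k : ℤ) → Int.gcd x' k = 1 →
        x' = x ∨ x' = (k : ℤ) - x := by
  obtain ⟨p, q⟩ := v₁
  obtain ⟨r, s⟩ := v₂
  have hpq : IsCoprime p q := Int.isCoprime_iff_gcd_eq_one.2 h1
  have hrs : IsCoprime r s := Int.isCoprime_iff_gcd_eq_one.2 h2
  have hD : (p * s - q * r).natAbs = k :=
    hcard ▸ natAbs_det_eq_card_inter_geodesic b₁ b₂ hpq hrs (by omega)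
  obtain ⟨A, x, e, hdet, hAv, hAw, hx1, hxk⟩ := exists_mulVec_eq_smul_of_natAbs_eq hpq hk hD
  have hA : IsUnit A.det := Int.isUnit_iff.2 (Or.inl hdet)
  have hAv' : A *ᵥ ![p, q] = ((1 : ℤˣ) : ℤ) • ![1, 0] := by rw [hAv, Units.val_one, one_smul]
  have hxk_coprime : Int.gcd x k = 1 :=
    Int.isCoprime_iff_gcd_eq_one.1 (isCoprime_of_mulVec_eq_smul hA (by simpa using hrs) hAw)
  refine ⟨A, x, 1, e, Or.inl hdet, hAv', hAw, hx1, hxk, fun hk2 => ?_, hxk_coprime, ?_⟩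
  · have hx_ne : x ≠ k := by
      rintro rfl
      rw [Int.gcd_self, Int.natAbs_natCast] at hxk_coprime
      omega
    omega
  · intro A' x' e₁' e₂' hdet' hA'v hA'w hx1' hxk' _
    exact eq_or_eq_sub_of_dvd hx1 hxk hx1' hxk' <| dvd_sub_or_dvd_add_of_mulVec k hA
      (Int.isUnit_iff.2 hdet') (by simpa using hpq) hAv' hAw hA'v hA'w
end
end

section
/- For every primitive vector (p,q) ∈ ℤ² and every k ≥ 1 and primitive vector (r,s) with |ps − qr| = k, there exists A ∈ GL(2,ℤ) with det A = ±1 such that A·(p,q) = (1,0) and A·(r,s) = (x,k) for some integer x with 0 ≤ x < k and gcd(x,k) = 1 (interpret gcd(0,1)=1). -/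
noncomputable section

/-!
Since `gcd(p, q) = 1`, Bézout gives `a p + b q = 1`, and the unimodular matrix `[[a, b], [-q, p]]`
sends `(p, q)` to `(1, 0)` and `(r, s)` to `(m, ps - qr)` for some `m`. Rescaling the second
coordinate by the sign of `ps - qr` and then shearing by `[[1, t], [0, 1]]` fixes `(1, 0)` and
replaces `m` by its residue modulo `k`. Finally, an integer matrix with unit determinant preserves
the gcd of the two coordinates, so the image of the primitive vector `(r, s)` is primitive.
-/

open Matrix

namespace Matrix

theorem of_mulVec_vec2 {R : Type*} [Semiring R] (a b c d u v : R) :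
    !![a, b; c, d] *ᵥ ![u, v] = ![a * u + b * v, c * u + d * v] := by
  simp only [mulVec_fin_two, of_apply, cons_val', cons_val_zero, cons_val_one, empty_val',
    cons_val_fin_one]

theorem gcd_dvd_gcd_mulVec (A : Matrix (Fin 2) (Fin 2) ℤ) (v : Fin 2 → ℤ) :
    Int.gcd (v 0) (v 1) ∣ Int.gcd ((A *ᵥ v) 0) ((A *ᵥ v) 1) := by
  have h0 := Int.gcd_dvd_left (v 0) (v 1)
  have h1 := Int.gcd_dvd_right (v 0) (v 1)
  rw [mulVec_fin_two]
  exact Int.dvd_gcd (dvd_add (h0.mul_left _) (h1.mul_left _))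
    (dvd_add (h0.mul_left _) (h1.mul_left _))

theorem gcd_mulVec_of_isUnit_det {A : Matrix (Fin 2) (Fin 2) ℤ} (hA : IsUnit A.det)
    (v : Fin 2 → ℤ) : Int.gcd ((A *ᵥ v) 0) ((A *ᵥ v) 1) = Int.gcd (v 0) (v 1) := by
  refine Nat.dvd_antisymm ?_ (gcd_dvd_gcd_mulVec A v)
  have h := gcd_dvd_gcd_mulVec A⁻¹ (A *ᵥ v)
  rwa [mulVec_mulVec, nonsing_inv_mul A hA, one_mulVec] at h

theorem exists_det_eq_one_mulVec_eq_one_zero {p q : ℤ} (h : Int.gcd p q = 1) (r s : ℤ) :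
    ∃ A : Matrix (Fin 2) (Fin 2) ℤ, A.det = 1 ∧ A *ᵥ ![p, q] = ![1, 0] ∧
      ∃ m, A *ᵥ ![r, s] = ![m, p * s - q * r] := by
  obtain ⟨a, b, hab⟩ := Int.isCoprime_iff_gcd_eq_one.mpr h
  refine ⟨!![a, b; -q, p], ?_, ?_, a * r + b * s, ?_⟩
  · rw [det_fin_two_of]
    linear_combination hab
  · rw [of_mulVec_vec2, hab]
    congr 2
    ring
  · rw [of_mulVec_vec2]
    congr 2
    ring

theorem exists_isUnit_det_mulVec_eq_emod (m : ℤ) {d : ℤ} (hd : d ≠ 0) :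
    ∃ A : Matrix (Fin 2) (Fin 2) ℤ, IsUnit A.det ∧ A *ᵥ ![1, 0] = ![1, 0] ∧
      A *ᵥ ![m, d] = ![m % d, (d.natAbs : ℤ)] := by
  refine ⟨!![1, -(m / d); 0, d.sign], ?_, ?_, ?_⟩
  · rw [det_fin_two_of, Int.isUnit_iff_natAbs_eq]
    simpa using Int.natAbs_sign_of_ne_zero hd
  · rw [of_mulVec_vec2]
    congr 2 <;> ring
  · rw [of_mulVec_vec2, Int.sign_mul_self, Int.emod_def]
    congr 2 <;> ring

end Matrix

/-- Normal form lemma: a primitive pair `(p,q)`, `(r,s)` with `|ps - qr| = k ≥ 1`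
can be taken by some `A ∈ GL(2,ℤ)` to `(1,0)` and `(x,k)` with `0 ≤ x < k`,
`gcd(x,k) = 1`. -/
theorem stmt5 (p q r s : ℤ) (k : ℕ) (hk : 1 ≤ k)
    (h1 : Int.gcd p q = 1) (h2 : Int.gcd r s = 1)
    (hd : (p * s - q * r).natAbs = k) :
    ∃ (A : Matrix (Fin 2) (Fin 2) ℤ) (x : ℤ),
      (A.det = 1 ∨ A.det = -1) ∧
      A.mulVec ![p, q] = ![1, 0] ∧
      A.mulVec ![r, s] = ![x, (k : ℤ)] ∧
      0 ≤ x ∧ x < (k : ℤ) ∧ Int.gcd x k = 1 := by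
  have hd0 : p * s - q * r ≠ 0 := by omega
  obtain ⟨B, hB, hBpq, m, hBrs⟩ := exists_det_eq_one_mulVec_eq_one_zero h1 r s
  obtain ⟨C, hC, hC10, hCm⟩ := exists_isUnit_det_mulVec_eq_emod m hd0
  have hCB : IsUnit (C * B).det := by rwa [det_mul, hB, mul_one]
  have hrs : (C * B) *ᵥ ![r, s] = ![m % (p * s - q * r), (k : ℤ)] := by
    rw [← mulVec_mulVec, hBrs, hCm, hd]
  refine ⟨C * B, m % (p * s - q * r), Int.isUnit_iff.mp hCB, ?_, hrs,
    Int.emod_nonneg m hd0, hd ▸ Int.emod_lt m hd0, ?_⟩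
  · rw [← mulVec_mulVec, hBpq, hC10]
  · simpa [hrs, h2] using gcd_mulVec_of_isUnit_det hCB ![r, s]
end
end

section
/- The pairs (1,0), (x,k) and (1,0), (x',k) of primitive vectors (with 1 ≤ x, x' ≤ k−1, gcd(x,k)=gcd(x',k)=1) are equivalent under GL(2,ℤ) acting simultaneously on both vectors up to signs if and only if x' = x or x' = k − x. -/
noncomputable section

lemma aux0 (m K : ℤ) (hK : 0 < K) (h1 : -K < m * K) (h2 : m * K < K) : m = 0 := by
  have hu : m < 1 := lt_of_mul_lt_mul_right (by linarith [one_mul K]) hK.le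
  have hl : -1 < m := lt_of_mul_lt_mul_right (by linarith [neg_one_mul K]) hK.le
  omega


/-- The pairs `(1,0),(x,k)` and `(1,0),(x',k)` are `GL(2,ℤ)`-equivalent up to
signs iff `x' = x` or `x' = k - x`. -/
theorem stmt6 (k : ℕ) (hk : 2 ≤ k) (x x' : ℤ)
    (hx1 : 1 ≤ x) (hx2 : x ≤ (k : ℤ) - 1) (hx1' : 1 ≤ x') (hx2' : x' ≤ (k : ℤ) - 1)
    (hg : Int.gcd x k = 1) (hg' : Int.gcd x' k = 1) :
    (∃ (A : Matrix (Fin 2) (Fin 2) ℤ) (e₁ e₂ : ℤˣ),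
        (A.det = 1 ∨ A.det = -1) ∧
        A.mulVec ![1, 0] = (e₁ : ℤ) • ![1, 0] ∧
        A.mulVec ![x, (k : ℤ)] = (e₂ : ℤ) • ![x', (k : ℤ)]) ↔
      (x' = x ∨ x' = (k : ℤ) - x) := by
  have hk0 : (0:ℤ) < k := by exact_mod_cast Nat.lt_of_lt_of_le Nat.zero_lt_two hk
  have hkk : (2:ℤ) ≤ k := by exact_mod_cast hk
  constructor
  · rintro ⟨A, e₁, e₂, hdet, h1, h2⟩
    have ha := congrFun h1 0
    have h20 := congrFun h2 0
    simp [Matrix.mulVec, dotProduct, Fin.sum_univ_two] at ha h20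
    have he1 := Int.units_eq_one_or e₁
    have he2 := Int.units_eq_one_or e₂
    have key : (e₂:ℤ) * x' = (e₁:ℤ) * x + A 0 1 * k := by
      rw [← h20, ← ha]
    set b := A 0 1 with hb
    rcases he1 with rfl | rfl <;> rcases he2 with rfl | rfl <;>
      simp only [Units.val_one, Units.val_neg, one_mul, neg_mul, neg_one_mul] at key
    · left
      have hbk : b * k = x' - x := by linarith
      have h0 : b = 0 := aux0 b k hk0 (by linarith) (by linarith)
      rw [h0] at hbk; linarith
    · right
      have hbk : b * k = -x' - x := by linarith
      have expand : (-b - 1) * k = x' + x - k := by linear_combination -hbk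
      have h0 : -b - 1 = 0 := aux0 _ k hk0 (by linarith) (by linarith)
      rw [h0] at expand; linarith
    · right
      have hbk : b * k = x' + x := by linarith
      have expand : (b - 1) * k = x' + x - k := by linear_combination hbk
      have h0 : b - 1 = 0 := aux0 _ k hk0 (by linarith) (by linarith)
      rw [h0] at expand; linarith
    · left
      have hbk : b * k = x - x' := by linarith
      have h0 : b = 0 := aux0 b k hk0 (by linarith) (by linarith)
      rw [h0] at hbk; linarith
  · rintro (rfl | rfl)
    · exact ⟨1, 1, 1, Or.inl (by simp), by simp, by simp⟩
    · refine ⟨!![-1, 1; 0, 1], -1, 1, Or.inr (by simp [Matrix.det_fin_two]), ?_, ?_⟩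
      · funext i; fin_cases i <;> simp [Matrix.mulVec, dotProduct, Fin.sum_univ_two]
      · funext i; fin_cases i <;> (simp [Matrix.mulVec, dotProduct, Fin.sum_univ_two]; try ring)
end
end

section
/- If all n ≥ 2 circles of an arrangement in the plane pass through one common point, then the number of regions of the complement belongs to L_n, the set of region counts of arrangements of n lines. -/
noncomputable section

/-- A line in the plane `ℝ²`. -/
def IsLine (L : Set (ℝ × ℝ)) : Prop :=
  ∃ a b c : ℝ, (a, b) ≠ (0, 0) ∧ L = {p : ℝ × ℝ | a * p.1 + b * p.2 = c}

/-- A circle in the plane `ℝ²`. -/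
def IsCircle (S : Set (ℝ × ℝ)) : Prop :=
  ∃ (o : ℝ × ℝ) (r : ℝ), 0 < r ∧
    S = {p : ℝ × ℝ | (p.1 - o.1) ^ 2 + (p.2 - o.2) ^ 2 = r ^ 2}

/-- An arrangement of lines is in general position if every two lines meet
(no two parallel) and no three are concurrent. -/
def LinesGenPos {n : ℕ} (ℓ : Fin n → Set (ℝ × ℝ)) : Prop :=
  (∀ i j, i ≠ j → (ℓ i ∩ ℓ j).Nonempty) ∧
    (∀ i j k, i ≠ j → j ≠ k → i ≠ k → ℓ i ∩ ℓ j ∩ ℓ k = ∅)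

/-- An arrangement of circles is in general position if every two circles cross
in exactly two points and no three circles are concurrent. -/
def CirclesGenPos {n : ℕ} (c : Fin n → Set (ℝ × ℝ)) : Prop :=
  (∀ i j, i ≠ j → Nat.card ↥(c i ∩ c j) = 2) ∧
    (∀ i j k, i ≠ j → j ≠ k → i ≠ k → c i ∩ c j ∩ c k = ∅)

/-- `Lset n`: possible numbers of regions of `n` distinct lines in the plane. -/
def Lset (n : ℕ) : Set ℕ :=
  {f | ∃ ℓ : Fin n → Set (ℝ × ℝ), (∀ i, IsLine (ℓ i)) ∧ Function.Injective ℓ ∧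
    f = regionCount (⋃ i, ℓ i)}

/-- `Cset n`: possible numbers of regions of `n` distinct circles in the plane,
not in general position, every two of which share at least one point. -/
def Cset (n : ℕ) : Set ℕ :=
  {f | ∃ c : Fin n → Set (ℝ × ℝ), (∀ i, IsCircle (c i)) ∧ Function.Injective c ∧
    (∀ i j, i ≠ j → (c i ∩ c j).Nonempty) ∧ ¬ CirclesGenPos c ∧
    f = regionCount (⋃ i, c i)}

/-- Inversion of the plane with center `O` and radius `r`. -/
def inversion (O : ℝ × ℝ) (r : ℝ) (P : ℝ × ℝ) : ℝ × ℝ :=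
  (O.1 + r ^ 2 * (P.1 - O.1) / ((P.1 - O.1) ^ 2 + (P.2 - O.2) ^ 2),
   O.2 + r ^ 2 * (P.2 - O.2) / ((P.1 - O.1) ^ 2 + (P.2 - O.2) ^ 2))

/-!
Inversion in `O` is a homeomorphism of the punctured plane carrying each circle through `O`,
minus `O`, onto a line that misses `O`. Hence the complement of the circles is homeomorphic to
the complement of the lines with `O` removed. Removing one point from an open subset of the plane
does not change its number of components, because a connected open subset of a real normed space
of dimension at least two stays connected when a point is removed.
-/

open Set Metric Filter Topology

theorem Homeomorph.natCard_connectedComponents_eq {X Y : Type*} [TopologicalSpace X]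
    [TopologicalSpace Y] (e : X ≃ₜ Y) :
    Nat.card (ConnectedComponents X) = Nat.card (ConnectedComponents Y) :=
  Nat.card_congr (e.isQuotientMap.isCoinducing.connectedComponentsHomeomorph fun y => by
    simpa [e.preimage_symm] using isConnected_singleton).toEquiv

theorem ConnectedComponents.mk_eq_mk_of_isPreconnected {X : Type*} [TopologicalSpace X]
    {S t : Set X} {a b : S} (ht : IsPreconnected t) (htS : t ⊆ S) (ha : (a : X) ∈ t)
    (hb : (b : X) ∈ t) : ConnectedComponents.mk a = ConnectedComponents.mk b := by
  have ht' : IsPreconnected (((↑) : S → X) ⁻¹' t) := by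
    rwa [← Topology.IsInducing.subtypeVal.isPreconnected_image, Subtype.image_preimage_coe,
      inter_eq_right.2 htS]
  exact ConnectedComponents.coe_eq_coe'.2 (ht'.subset_connectedComponent hb ha)

theorem IsPreconnected.diff_singleton {X : Type*} [TopologicalSpace X] {U V : Set X} {x : X}
    [(𝓝[≠] x).NeBot] (hU : IsPreconnected U) (hV : IsOpen V) (hxV : x ∈ V) (hVU : V ⊆ U)
    (hV' : IsPreconnected (V \ {x})) : IsPreconnected (U \ {x}) := by
  rw [isPreconnected_iff_subset_of_disjoint] at hU hV' ⊢
  intro u v hu hv hcover hdisj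
  have hVcover : V \ {x} ⊆ u ∪ v := (sdiff_subset_sdiff_left hVU).trans hcover
  have hVdisj : V \ {x} ∩ (u ∩ v) = ∅ :=
    subset_empty_iff.1 (hdisj ▸ inter_subset_inter_left _ (sdiff_subset_sdiff_left hVU))
  wlog hVu : V \ {x} ⊆ u generalizing u v
  · exact (this v u hv hu (by rwa [union_comm]) (by rwa [inter_comm v u]) (by rwa [union_comm])
      (by rwa [inter_comm v u]) ((hV' u v hu hv hVcover hVdisj).resolve_left hVu)).symm
  -- a neighbourhood of `x` inside `v` would meet the punctured neighbourhood `V \ {x} ⊆ u`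
  have hxv : x ∉ v := by
    intro hx
    have hnhds : V ∩ v ∩ {x}ᶜ ∈ 𝓝[≠] x :=
      inter_mem (mem_nhdsWithin_of_mem_nhds ((hV.inter hv).mem_nhds ⟨hxV, hx⟩))
        self_mem_nhdsWithin
    obtain ⟨w, ⟨hwV, hwv⟩, hwx⟩ := Filter.nonempty_of_mem hnhds
    exact (eq_empty_iff_forall_notMem.1 hdisj) w ⟨⟨hVU hwV, hwx⟩, hVu ⟨hwV, hwx⟩, hwv⟩
  have hUcover : U ⊆ (u ∪ V) ∪ v := fun y hy => by
    by_cases hyx : y = x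
    · exact Or.inl (Or.inr (hyx ▸ hxV))
    · rcases hcover ⟨hy, hyx⟩ with h | h
      exacts [Or.inl (Or.inl h), Or.inr h]
  have hUdisj : U ∩ ((u ∪ V) ∩ v) = ∅ := by
    refine eq_empty_iff_forall_notMem.2 fun y ⟨hyU, hyuV, hyv⟩ => ?_
    have hyx : y ≠ x := fun h => hxv (h ▸ hyv)
    have hyu : y ∈ u := hyuV.elim id fun hyV => hVu ⟨hyV, hyx⟩
    exact (eq_empty_iff_forall_notMem.1 hdisj) y ⟨⟨hyU, hyx⟩, hyu, hyv⟩
  rcases hU _ _ (hu.union hV) hv hUcover hUdisj with h | h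
  · exact Or.inl fun y ⟨hyU, hyx⟩ => (h hyU).elim id fun hyV => hVu ⟨hyV, hyx⟩
  · exact absurd (h (hVU hxV)) hxv

section NormedSpace

variable {E : Type*} [NormedAddCommGroup E] [NormedSpace ℝ E]

theorem isPreconnected_ball_diff_center (h : 1 < Module.rank ℝ E) (x : E) (r : ℝ) :
    IsPreconnected (ball x r \ {x}) := by
  rcases le_or_gt r 0 with hr | hr
  · simp [ball_eq_empty.2 hr, isPreconnected_empty]
  set e := OpenPartialHomeomorph.univBall (E := E) x r
  have he : ball x r \ {x} = e '' {0}ᶜ := by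
    have hinj : Function.Injective e := fun a b hab =>
      e.injOn (by simp [e]) (by simp [e]) hab
    rw [compl_eq_univ_sdiff, image_sdiff hinj, image_singleton,
      ← OpenPartialHomeomorph.univBall_source x r, e.image_source_eq_target,
      OpenPartialHomeomorph.univBall_target x hr, OpenPartialHomeomorph.univBall_apply_zero]
  rw [he]
  exact (isConnected_compl_singleton_of_one_lt_rank h 0).isPreconnected.image _
    (OpenPartialHomeomorph.continuous_univBall x r).continuousOn

theorem IsOpen.isPreconnected_diff_singleton (h : 1 < Module.rank ℝ E) {U : Set E}
    (hU : IsOpen U) (hU' : IsPreconnected U) (x : E) : IsPreconnected (U \ {x}) := by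
  by_cases hx : x ∈ U
  · have : Nontrivial E := (rank_pos_iff_nontrivial (R := ℝ)).1 (zero_lt_one.trans h)
    obtain ⟨r, hr, hball⟩ := Metric.isOpen_iff.1 hU x hx
    exact hU'.diff_singleton isOpen_ball (mem_ball_self hr) hball
      (isPreconnected_ball_diff_center h x r)
  · rwa [sdiff_singleton_eq_self hx]

theorem IsOpen.natCard_connectedComponents_diff_singleton (h : 1 < Module.rank ℝ E) {U : Set E}
    (hU : IsOpen U) {x : E} (hx : x ∈ U) :
    Nat.card (ConnectedComponents ↥(U \ {x})) = Nat.card (ConnectedComponents U) := by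
  have hincl : Continuous (inclusion (sdiff_subset : U \ {x} ⊆ U)) := continuous_inclusion _
  refine Nat.card_congr (Equiv.ofBijective hincl.connectedComponentsMap ⟨?_, ?_⟩)
  · rintro ⟨a⟩ ⟨b⟩ hab
    -- the component of `b` in `U` is open, so it stays connected once `x` is removed
    have hab : (a : E) ∈ connectedComponentIn U b := by
      rw [connectedComponentIn_eq_image b.2.1]
      exact ⟨_, ConnectedComponents.coe_eq_coe'.1 hab, rfl⟩
    refine ConnectedComponents.mk_eq_mk_of_isPreconnected
      (hU.connectedComponentIn.isPreconnected_diff_singleton h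
        isPreconnected_connectedComponentIn x)
      (sdiff_subset_sdiff_left (connectedComponentIn_subset U b)) ⟨hab, a.2.2⟩
      ⟨mem_connectedComponentIn b.2.1, b.2.2⟩
  · rintro ⟨a⟩
    by_cases hax : (a : E) = x
    · have : Nontrivial E := (rank_pos_iff_nontrivial (R := ℝ)).1 (zero_lt_one.trans h)
      obtain ⟨r, hr, hball⟩ := Metric.isOpen_iff.1 hU x hx
      have hnhds : ball x r ∩ {x}ᶜ ∈ 𝓝[≠] x :=
        inter_mem (mem_nhdsWithin_of_mem_nhds (ball_mem_nhds x hr)) self_mem_nhdsWithin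
      obtain ⟨y, hy, hyx⟩ := Filter.nonempty_of_mem hnhds
      exact ⟨.mk ⟨y, hball hy, hyx⟩, ConnectedComponents.mk_eq_mk_of_isPreconnected
        (convex_ball x r).isPreconnected hball hy (hax ▸ mem_ball_self hr)⟩
    · exact ⟨.mk ⟨a, a.2, hax⟩, rfl⟩

end NormedSpace

theorem sq_add_sq_sub_pos {p O : ℝ × ℝ} (hp : p ≠ O) :
    0 < (p.1 - O.1) ^ 2 + (p.2 - O.2) ^ 2 := by
  by_cases h : p.1 = O.1
  · have h2 : p.2 - O.2 ≠ 0 := sub_ne_zero.2 fun h2 => hp (Prod.ext h h2)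
    positivity
  · have h1 : p.1 - O.1 ≠ 0 := sub_ne_zero.2 h
    positivity

section Inversion

variable {O p : ℝ × ℝ} {R : ℝ}

theorem inversion_ne_center (hR : R ≠ 0) (hp : p ≠ O) : inversion O R p ≠ O := by
  have hd := (sq_add_sq_sub_pos hp).ne'
  intro h
  apply hp
  have h1 := congrArg Prod.fst h
  have h2 := congrArg Prod.snd h
  simp only [inversion, add_eq_left, div_eq_zero_iff, mul_eq_zero, pow_eq_zero_iff,
    ne_eq, OfNat.ofNat_ne_zero, not_false_eq_true, hR, hd, sub_eq_zero, false_or, or_false] at h1 h2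
  exact Prod.ext h1 h2

theorem inversion_sq_add_sq_sub (hp : p ≠ O) :
    ((inversion O R p).1 - O.1) ^ 2 + ((inversion O R p).2 - O.2) ^ 2 =
      R ^ 4 / ((p.1 - O.1) ^ 2 + (p.2 - O.2) ^ 2) := by
  have hd := (sq_add_sq_sub_pos hp).ne'
  simp only [inversion, add_sub_cancel_left]
  field_simp

theorem inversion_inversion (hR : R ≠ 0) (hp : p ≠ O) :
    inversion O R (inversion O R p) = p := by
  have hd := (sq_add_sq_sub_pos hp).ne'
  have hD := inversion_sq_add_sq_sub (R := R) hp
  ext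
  · rw [inversion, hD]
    simp only [inversion, add_sub_cancel_left]
    field_simp
    ring
  · rw [inversion, hD]
    simp only [inversion, add_sub_cancel_left]
    field_simp
    ring

theorem continuousOn_inversion : ContinuousOn (inversion O R) {O}ᶜ := by
  have hd : ∀ p ∈ ({O}ᶜ : Set (ℝ × ℝ)), (p.1 - O.1) ^ 2 + (p.2 - O.2) ^ 2 ≠ 0 :=
    fun p hp => (sq_add_sq_sub_pos hp).ne'
  unfold inversion
  fun_prop (disch := assumption)

theorem IsCircle.exists_isLine_inversion {S : Set (ℝ × ℝ)} (hS : IsCircle S) (hO : O ∈ S)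
    (hR : R ≠ 0) : ∃ L, IsLine L ∧ O ∉ L ∧ ∀ p ≠ O, p ∈ S ↔ inversion O R p ∈ L := by
  obtain ⟨o, r, hr, rfl⟩ := hS
  simp only [mem_ofPred_eq] at hO
  -- for `q = inversion O R p` the equation of `L` reads `|p - O|² = 2 (p - O) · (o - O)`,
  -- which is `|p - o|² = |O - o|²`
  refine ⟨{q | (o.1 - O.1) * q.1 + (o.2 - O.2) * q.2 =
      R ^ 2 / 2 + (o.1 - O.1) * O.1 + (o.2 - O.2) * O.2}, ⟨_, _, _, ?_, rfl⟩, ?_, ?_⟩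
  · intro h
    simp only [Prod.mk.injEq, sub_eq_zero] at h
    rw [h.1, h.2] at hO
    nlinarith
  · simp only [mem_ofPred_eq]
    have := pow_pos (abs_pos.2 hR) 2
    rw [sq_abs] at this
    linarith
  · intro p hp
    have hd := (sq_add_sq_sub_pos hp).ne'
    simp only [mem_ofPred_eq, inversion]
    field_simp
    constructor
    · intro h
      linear_combination (-R ^ 2) * (h - hO)
    · intro h
      have h' : R ^ 2 * ((p.1 - o.1) ^ 2 + (p.2 - o.2) ^ 2 - r ^ 2) = 0 := by
        linear_combination -h + R ^ 2 * hO
      simpa [hR, sub_eq_zero] using h'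

end Inversion

theorem IsLine.isClosed {L : Set (ℝ × ℝ)} (hL : IsLine L) : IsClosed L := by
  obtain ⟨a, b, c, -, rfl⟩ := hL
  exact isClosed_eq (by fun_prop) continuous_const

def inversionComplHomeomorph {S T : Set (ℝ × ℝ)} {O : ℝ × ℝ} {R : ℝ} (hR : R ≠ 0) (hO : O ∈ S)
    (hST : ∀ p ≠ O, p ∈ S ↔ inversion O R p ∈ T) : ↥Sᶜ ≃ₜ ↥(Tᶜ \ {O}) where
  toFun p := ⟨inversion O R p, fun h => p.2 ((hST p (ne_of_mem_of_not_mem hO p.2).symm).2 h),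
    inversion_ne_center hR (ne_of_mem_of_not_mem hO p.2).symm⟩
  invFun q := ⟨inversion O R q, fun h => q.2.1 (by
    rwa [hST _ (inversion_ne_center hR q.2.2), inversion_inversion hR q.2.2] at h)⟩
  left_inv p := Subtype.ext (inversion_inversion hR (ne_of_mem_of_not_mem hO p.2).symm)
  right_inv q := Subtype.ext (inversion_inversion hR q.2.2)
  continuous_toFun := (continuousOn_inversion.comp_continuous continuous_subtype_val
    fun p => (ne_of_mem_of_not_mem hO p.2).symm).subtype_mk _
  continuous_invFun := (continuousOn_inversion.comp_continuous continuous_subtype_val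
    fun q => q.2.2).subtype_mk _

/-- If all `n ≥ 2` circles pass through one common point, then the number of
regions of the complement belongs to `Lset n`. -/
theorem stmt13 (n : ℕ) (hn : 2 ≤ n) (c : Fin n → Set (ℝ × ℝ))
    (hc : ∀ i, IsCircle (c i)) (hinj : Function.Injective c)
    (O : ℝ × ℝ) (hO : ∀ i, O ∈ c i) :
    regionCount (⋃ i, c i) ∈ Lset n := by
  choose ℓ hℓ hOℓ hcℓ using fun i => (hc i).exists_isLine_inversion (hO i) one_ne_zero
  refine ⟨ℓ, hℓ, fun i j hij => hinj ?_, ?_⟩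
  · ext p
    rcases eq_or_ne p O with rfl | hp
    · simp only [hO]
    · rw [hcℓ i p hp, hcℓ j p hp, hij]
  have hOc : O ∈ ⋃ i, c i := mem_iUnion.2 ⟨⟨0, by omega⟩, hO _⟩
  have hcℓ' : ∀ p ≠ O, p ∈ ⋃ i, c i ↔ inversion O 1 p ∈ ⋃ i, ℓ i := fun p hp => by
    simp only [mem_iUnion, hcℓ _ p hp]
  have hOℓ' : O ∈ (⋃ i, ℓ i)ᶜ := by simpa using hOℓ
  have hopen : IsOpen (⋃ i, ℓ i)ᶜ :=
    (isClosed_iUnion_of_finite fun i => (hℓ i).isClosed).isOpen_compl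
  rw [regionCount, regionCount,
    (inversionComplHomeomorph one_ne_zero hOc hcℓ').natCard_connectedComponents_eq,
    hopen.natCard_connectedComponents_diff_singleton (by norm_num) hOℓ']
end
end

section
/- For n ≥ 3, the set L_n of possible region counts of n distinct lines in the plane contains n+1, 2n, 3n−3, and 3n−2, where n+1 is the minimum (all lines parallel would give n+1; concurrent lines give 2n). -/
noncomputable section

/-!
The connected components of the complement of finitely many lines are exactly its nonempty sign
cells (the sets of points lying on prescribed sides of every line): the side pattern is locally
constant off the lines and every cell is convex. Counting cells, `p` vertical and `m` horizontal
lines give `(p + 1) * (m + 1)` regions, hence `n + 1`, `2 * n` and `3 * n - 3` for `p = 0, 1, 2`,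
while `n - 2` horizontal lines and two lines crossing below them give `3 * n - 2`. For the lower
bound, adding a line to an arrangement keeps every old cell and splits the one containing a point
of the new line that lies on no other line.
-/

open Set Function Topology

theorem IsLocallyConstant.card_connectedComponents_eq {Y β : Type*} [TopologicalSpace Y]
    {σ : Y → β} (hσ : IsLocallyConstant σ) (hfib : ∀ b, IsPreconnected (σ ⁻¹' {b})) :
    Nat.card (ConnectedComponents Y) = Nat.card (range σ) := by
  have hrel : ∀ x y : Y, connectedComponent x = connectedComponent y ↔ σ x = σ y := by
    intro x y
    rw [connectedComponent_eq_iff_mem]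
    refine ⟨fun hx => (hσ.apply_eq_of_isPreconnected isPreconnected_connectedComponent hx
      mem_connectedComponent), fun h => ?_⟩
    exact (hfib (σ y)).subset_connectedComponent (mem_preimage.2 rfl) h
  exact Nat.card_congr ((Quotient.congrRight fun x y => (hrel x y).trans Setoid.ker_def.symm).trans
    (Setoid.quotientKerEquivRange σ))

def lineSet (a b c : ℝ) : Set (ℝ × ℝ) := {p | a * p.1 + b * p.2 = c}

theorem isLine_lineSet {a b : ℝ} (hab : (a, b) ≠ (0, 0)) (c : ℝ) : IsLine (lineSet a b c) :=
  ⟨a, b, c, hab, rfl⟩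

theorem sq_add_sq_ne_zero {a b : ℝ} (hab : (a, b) ≠ (0, 0)) : a ^ 2 + b ^ 2 ≠ 0 := by
  contrapose! hab
  simp only [Prod.mk.injEq]
  constructor <;> nlinarith [sq_nonneg a, sq_nonneg b]

def lineParam (a b c t : ℝ) : ℝ × ℝ :=
  (a * c / (a ^ 2 + b ^ 2) - t * b, b * c / (a ^ 2 + b ^ 2) + t * a)

theorem lineParam_mem {a b : ℝ} (hab : (a, b) ≠ (0, 0)) (c t : ℝ) :
    lineParam a b c t ∈ lineSet a b c := by
  have := sq_add_sq_ne_zero hab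
  simp only [lineParam, lineSet, mem_ofPred_eq]
  field_simp
  ring

theorem lineParam_injective {a b : ℝ} (hab : (a, b) ≠ (0, 0)) (c : ℝ) :
    Injective (lineParam a b c) := by
  intro t t' h
  simp only [lineParam, Prod.mk.injEq] at h
  have hb : t * b = t' * b := by linarith
  have ha : t * a = t' * a := by linarith
  by_cases ha0 : a = 0
  · exact mul_right_cancel₀ (fun hb0 => hab (by simp [ha0, hb0])) hb
  · exact mul_right_cancel₀ ha0 ha

theorem mul_eq_mul_of_lineSet_eq {a b c a' b' c' : ℝ} (hab : (a, b) ≠ (0, 0))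
    (h : lineSet a b c = lineSet a' b' c') :
    a * b' = a' * b ∧ a * c' = a' * c ∧ b * c' = b' * c := by
  have hN := sq_add_sq_ne_zero hab
  have h0 := h ▸ lineParam_mem hab c 0
  have h1 := h ▸ lineParam_mem hab c 1
  simp only [lineParam, lineSet, mem_ofPred_eq] at h0 h1
  have hcross : a * b' = a' * b := by linear_combination h1 - h0
  refine ⟨hcross, ?_, ?_⟩
  all_goals field_simp at h0; refine mul_left_cancel₀ hN ?_
  · linear_combination (-a) * h0 + b * c * hcross
  · linear_combination (-b) * h0 - a * c * hcross

theorem eq_zero_of_mul_eq_zero_of_mul_eq_zero {R : Type*} [MulZeroClass R] [NoZeroDivisors R]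
    {x y z : R} (hxy : (x, y) ≠ (0, 0))
    (hx : x * z = 0) (hy : y * z = 0) : z = 0 := by
  by_contra hz
  exact hxy (by simp_all)

theorem lineSet_subset_of_two_points {a b c a' b' c' : ℝ} (hab : (a, b) ≠ (0, 0)) {p q : ℝ × ℝ}
    (hpq : p ≠ q) (hp : p ∈ lineSet a b c ∩ lineSet a' b' c')
    (hq : q ∈ lineSet a b c ∩ lineSet a' b' c') : lineSet a b c ⊆ lineSet a' b' c' := by
  intro r hr
  simp only [lineSet, mem_inter_iff, mem_ofPred_eq] at hp hq hr ⊢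
  have hd : (q.1 - p.1, q.2 - p.2) ≠ (0, 0) := by
    contrapose! hpq
    simp only [Prod.mk.injEq, sub_eq_zero] at hpq
    exact Prod.ext hpq.1.symm hpq.2.symm
  -- `r - p` is parallel to `q - p`, since both are orthogonal to `(a, b)`
  have hpar : (r.1 - p.1) * (q.2 - p.2) - (r.2 - p.2) * (q.1 - p.1) = 0 :=
    eq_zero_of_mul_eq_zero_of_mul_eq_zero hab
      (by linear_combination (q.2 - p.2) * hr - (r.2 - p.2) * hq.1 + (r.2 - q.2) * hp.1)
      (by linear_combination (r.1 - p.1) * hq.1 - (q.1 - p.1) * hr + (q.1 - r.1) * hp.1)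
  have := eq_zero_of_mul_eq_zero_of_mul_eq_zero (z := a' * (r.1 - p.1) + b' * (r.2 - p.2)) hd
    (by linear_combination (r.1 - p.1) * hq.2 - (r.1 - p.1) * hp.2 - b' * hpar)
    (by linear_combination (r.2 - p.2) * hq.2 - (r.2 - p.2) * hp.2 + a' * hpar)
  linear_combination this + hp.2

/-- Each of the other lines meets the line at most once, and a line is infinite. -/
theorem exists_mem_lineSet_forall_notMem {ι : Type*} [Finite ι] {A B C : ℝ}
    (hAB : (A, B) ≠ (0, 0)) {a b c : ι → ℝ} (hab : ∀ i, (a i, b i) ≠ (0, 0))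
    (hne : ∀ i, lineSet (a i) (b i) (c i) ≠ lineSet A B C) :
    ∃ q ∈ lineSet A B C, ∀ i, q ∉ lineSet (a i) (b i) (c i) := by
  have hsub : ∀ i, (lineSet A B C ∩ lineSet (a i) (b i) (c i)).Subsingleton := by
    intro i p hp q hq
    by_contra hpq
    exact hne i ((lineSet_subset_of_two_points (hab i) hpq ⟨hp.2, hp.1⟩ ⟨hq.2, hq.1⟩).antisymm
      (lineSet_subset_of_two_points hAB hpq hp hq))
  have hinf : (lineSet A B C).Infinite :=
    infinite_of_injective_forall_mem (lineParam_injective hAB C) (lineParam_mem hAB C)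
  by_contra! h
  refine hinf ((finite_iUnion fun i => (hsub i).finite).subset fun q hq => ?_)
  obtain ⟨i, hi⟩ := h q hq
  exact mem_iUnion.2 ⟨i, hq, hi⟩

theorem IsOpen.exists_mem_sides_of_mem_lineSet {V : Set (ℝ × ℝ)} (hV : IsOpen V) {q : ℝ × ℝ}
    (hq : q ∈ V) {A B C : ℝ} (hAB : (A, B) ≠ (0, 0)) (hqL : q ∈ lineSet A B C) :
    (∃ p ∈ V, C < A * p.1 + B * p.2) ∧ ∃ p ∈ V, A * p.1 + B * p.2 < C := by
  have hN : 0 < A ^ 2 + B ^ 2 := lt_of_le_of_ne (by positivity) (sq_add_sq_ne_zero hAB).symm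
  have hV' : ∀ᶠ t in 𝓝 (0 : ℝ), q + t • (A, B) ∈ V :=
    (by fun_prop : Continuous fun t : ℝ => q + t • (A, B)).continuousAt.preimage_mem_nhds
      (by simpa using hV.mem_nhds hq)
  have hval : ∀ t : ℝ, A * (q + t • (A, B)).1 + B * (q + t • (A, B)).2 = C + t * (A ^ 2 + B ^ 2) := by
    intro t
    simp only [lineSet, mem_ofPred_eq] at hqL
    simp only [Prod.fst_add, Prod.snd_add, Prod.smul_fst, Prod.smul_snd, smul_eq_mul]
    linear_combination hqL
  obtain ⟨t, htV, ht⟩ := ((hV'.filter_mono nhdsWithin_le_nhds).and self_mem_nhdsWithin).exists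
    (f := 𝓝[>] 0)
  obtain ⟨t', ht'V, ht'⟩ := ((hV'.filter_mono nhdsWithin_le_nhds).and self_mem_nhdsWithin).exists
    (f := 𝓝[<] 0)
  refine ⟨⟨_, htV, ?_⟩, ⟨_, ht'V, ?_⟩⟩ <;> rw [hval]
  · nlinarith
  · nlinarith

section Arrangement

variable {ι : Type*} (a b c : ι → ℝ)

def signCell (s : ι → Bool) : Set (ℝ × ℝ) :=
  ⋂ i, if s i then {p | c i < a i * p.1 + b i * p.2} else {p | a i * p.1 + b i * p.2 < c i}

def lineSigns (p : ℝ × ℝ) : ι → Bool := fun i => decide (c i < a i * p.1 + b i * p.2)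

theorem mem_signCell_iff {s : ι → Bool} {p : ℝ × ℝ} :
    p ∈ signCell a b c s ↔ p ∈ (⋃ i, lineSet (a i) (b i) (c i))ᶜ ∧ lineSigns a b c p = s := by
  simp only [signCell, lineSet, lineSigns, mem_iInter, mem_compl_iff, mem_iUnion, not_exists,
    funext_iff, ← forall_and, mem_ofPred_eq]
  refine forall_congr' fun i => ?_
  cases s i <;> simp only [Bool.false_eq_true, if_true, if_false, mem_ofPred_eq, decide_eq_true_eq,
    decide_eq_false_iff_not, not_lt]
  · exact ⟨fun h => ⟨h.ne, h.le⟩, fun h => lt_of_le_of_ne h.2 h.1⟩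
  · exact ⟨fun h => ⟨h.ne', h⟩, fun h => h.2⟩

theorem isOpen_signCell [Finite ι] (s : ι → Bool) : IsOpen (signCell a b c s) := by
  refine isOpen_iInter_of_finite fun i => ?_
  split
  · exact isOpen_lt continuous_const (by fun_prop)
  · exact isOpen_lt (by fun_prop) continuous_const

theorem convex_signCell (s : ι → Bool) : Convex ℝ (signCell a b c s) := by
  have hlin : ∀ i, IsLinearMap ℝ fun p : ℝ × ℝ => a i * p.1 + b i * p.2 := fun i =>
    ⟨fun p q => by simp only [Prod.fst_add, Prod.snd_add]; ring,
      fun r p => by simp only [Prod.smul_fst, Prod.smul_snd, smul_eq_mul]; ring⟩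
  refine convex_iInter fun i => ?_
  split
  · exact convex_halfSpace_gt (hlin i) _
  · exact convex_halfSpace_lt (hlin i) _

def realizedSigns : Set (ι → Bool) := {s | (signCell a b c s).Nonempty}

theorem realizedSigns_eq_image :
    realizedSigns a b c = lineSigns a b c '' (⋃ i, lineSet (a i) (b i) (c i))ᶜ := by
  ext s
  simp only [realizedSigns, mem_ofPred_eq, Set.Nonempty, mem_signCell_iff, mem_image]

theorem regionCount_iUnion_lineSet [Finite ι] :
    regionCount (⋃ i, lineSet (a i) (b i) (c i)) = (realizedSigns a b c).ncard := by
  set U := (⋃ i, lineSet (a i) (b i) (c i))ᶜ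
  have hfib : ∀ s, ((lineSigns a b c) ∘ (↑) : U → ι → Bool) ⁻¹' {s} = (↑) ⁻¹' signCell a b c s := by
    intro s; ext ⟨p, hp⟩
    simp only [mem_preimage, comp_apply, mem_singleton_iff, mem_signCell_iff, iff_and_self]
    exact fun _ => hp
  have hrange : range ((lineSigns a b c) ∘ (↑) : U → ι → Bool) = realizedSigns a b c := by
    rw [range_comp, Subtype.range_coe, realizedSigns_eq_image]
  have hloc : IsLocallyConstant ((lineSigns a b c) ∘ (↑) : U → ι → Bool) := by
    refine (IsLocallyConstant.iff_isOpen_fiber).2 fun s => ?_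
    rw [hfib]
    exact (isOpen_signCell a b c s).preimage continuous_subtype_val
  have hconn : ∀ s, IsPreconnected (((lineSigns a b c) ∘ (↑) : U → ι → Bool) ⁻¹' {s}) := by
    intro s
    rw [hfib, ← Topology.IsInducing.subtypeVal.isPreconnected_image, image_preimage_eq_of_subset]
    · exact (convex_signCell a b c s).isPreconnected
    · intro p hp
      rw [Subtype.range_coe]
      exact ((mem_signCell_iff a b c).1 hp).1
  rw [regionCount, hloc.card_connectedComponents_eq hconn, hrange, Nat.card_coe_set_eq]

end Arrangement

theorem signCell_sumElim {ι κ : Type*} (a b c : ι → ℝ) (a' b' c' : κ → ℝ) (s : ι ⊕ κ → Bool) :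
    signCell (Sum.elim a a') (Sum.elim b b') (Sum.elim c c') s =
      signCell a b c (s ∘ Sum.inl) ∩ signCell a' b' c' (s ∘ Sum.inr) := by
  ext p
  simp only [signCell, mem_iInter, mem_inter_iff, Sum.forall, Sum.elim_inl, Sum.elim_inr,
    comp_apply]

theorem regionCount_mem_Lset {n : ℕ} {ι : Type*} (e : Fin n ≃ ι) (L : ι → Set (ℝ × ℝ))
    (hL : ∀ i, IsLine (L i)) (hinj : Injective L) : regionCount (⋃ i, L i) ∈ Lset n :=
  ⟨L ∘ e, fun i => hL (e i), hinj.comp e.injective, by rw [comp_def, e.surjective.iUnion_comp L]⟩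

section Thresholds

variable (m : ℕ)

def thresholdCell (u : Fin m → Bool) : Set ℝ :=
  {t | ∀ j : Fin m, if u j then (j : ℝ) < t else t < j}

def stepPattern (k : ℕ) : Fin m → Bool := fun j => decide (j.val < k)

theorem mem_thresholdCell_stepPattern {k : ℕ} {t : ℝ} (hk : (k : ℝ) - 1 < t) (ht : t < k) :
    t ∈ thresholdCell m (stepPattern m k) := by
  intro j
  by_cases hj : j.val < k
  · have : (j : ℝ) + 1 ≤ k := by exact_mod_cast hj
    simp only [stepPattern, hj, decide_true, if_true]
    linarith
  · have : (k : ℝ) ≤ j := by exact_mod_cast not_lt.1 hj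
    simp only [stepPattern, hj, decide_false, Bool.false_eq_true, if_false]
    linarith

theorem eq_stepPattern_of_mem_thresholdCell {u : Fin m → Bool} {t : ℝ}
    (ht : t ∈ thresholdCell m u) : u = stepPattern m ⌈t⌉₊ := by
  funext j
  have h := ht j
  cases hu : u j <;> simp only [hu, Bool.false_eq_true, if_true, if_false] at h <;>
    simp only [stepPattern, Nat.lt_ceil, eq_comm (a := false), eq_comm (a := true),
      decide_eq_true_iff, decide_eq_false_iff_not, not_lt]
  · exact h.le
  · exact h

theorem stepPattern_injOn : InjOn (stepPattern m) (Iic m) := by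
  intro k hk l hl h
  by_contra hkl
  rcases Nat.lt_or_gt_of_ne hkl with hlt | hlt
  · have := congrFun h ⟨k, lt_of_lt_of_le hlt hl⟩
    simp [stepPattern] at this
    omega
  · have := congrFun h ⟨l, lt_of_lt_of_le hlt hk⟩
    simp [stepPattern] at this
    omega

theorem thresholdCell_nonempty_iff {u : Fin m → Bool} :
    (thresholdCell m u).Nonempty ↔ u ∈ stepPattern m '' Iic m := by
  constructor
  · rintro ⟨t, ht⟩
    refine ⟨min ⌈t⌉₊ m, mem_Iic.2 (min_le_right _ _), ?_⟩
    rw [eq_stepPattern_of_mem_thresholdCell m ht]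
    funext j
    simp [stepPattern, j.isLt]
  · rintro ⟨k, -, rfl⟩
    exact ⟨k - 1 / 2, mem_thresholdCell_stepPattern m (by linarith) (by linarith)⟩

theorem ncard_image_stepPattern : (stepPattern m '' Iic m).ncard = m + 1 := by
  rw [(stepPattern_injOn m).ncard_image, ncard_Iic_nat]

end Thresholds

theorem signCell_vertical {p : ℕ} (u : Fin p → Bool) :
    signCell (fun _ => 1) (fun _ => 0) (fun j : Fin p => (j : ℝ)) u =
      Prod.fst ⁻¹' thresholdCell p u := by
  ext q
  simp only [signCell, thresholdCell, mem_iInter, mem_preimage, mem_ofPred_eq]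
  refine forall_congr' fun j => ?_
  cases u j <;> simp

theorem signCell_horizontal {m : ℕ} (u : Fin m → Bool) :
    signCell (fun _ => 0) (fun _ => 1) (fun j : Fin m => (j : ℝ)) u =
      Prod.snd ⁻¹' thresholdCell m u := by
  ext q
  simp only [signCell, thresholdCell, mem_iInter, mem_preimage, mem_ofPred_eq]
  refine forall_congr' fun j => ?_
  cases u j <;> simp

theorem grid_mem_Lset (p m : ℕ) : (p + 1) * (m + 1) ∈ Lset (p + m) := by
  set a : Fin p ⊕ Fin m → ℝ := Sum.elim (fun _ => 1) (fun _ => 0)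
  set b : Fin p ⊕ Fin m → ℝ := Sum.elim (fun _ => 0) (fun _ => 1)
  set c : Fin p ⊕ Fin m → ℝ := Sum.elim (fun j => (j : ℝ)) (fun k => (k : ℝ))
  have hrealized : realizedSigns a b c = Equiv.sumArrowEquivProdArrow _ _ _ ⁻¹'
      ((stepPattern p '' Iic p) ×ˢ (stepPattern m '' Iic m)) := by
    ext s
    simp only [realizedSigns, a, b, c, signCell_sumElim, signCell_vertical, signCell_horizontal,
      ← Set.prod_eq, prod_nonempty_iff, thresholdCell_nonempty_iff, mem_ofPred_eq, mem_preimage,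
      mem_prod]
    rfl
  have hcount := regionCount_iUnion_lineSet a b c
  rw [hrealized, ncard_preimage_of_injective_subset_range (Equiv.injective _) (by simp), ncard_prod,
    ncard_image_stepPattern, ncard_image_stepPattern] at hcount
  rw [← hcount]
  refine regionCount_mem_Lset finSumFinEquiv.symm _
    (fun i => isLine_lineSet (by cases i <;> simp [a, b]) _) ?_
  rintro (j | j) (k | k) h <;> have := mul_eq_mul_of_lineSet_eq (by simp [a, b]) h <;>
    simp_all [a, b, c, Fin.ext_iff, eq_comm]

theorem mem_signCell_crossing {v : Fin 2 → Bool} {q : ℝ × ℝ} :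
    q ∈ signCell ![1, 1] ![0, -1] ![0, 1 / 2] v ↔
      (if v 0 then 0 < q.1 else q.1 < 0) ∧ (if v 1 then 1 / 2 < q.1 - q.2 else q.1 - q.2 < 1 / 2) := by
  simp only [signCell, mem_iInter, Fin.forall_fin_two]
  cases v 0 <;> cases v 1 <;> simp [sub_eq_add_neg]

theorem crossing_cell_nonempty_iff (m : ℕ) (u : Fin m → Bool) (v : Fin 2 → Bool) :
    (Prod.snd ⁻¹' thresholdCell m u ∩ signCell ![1, 1] ![0, -1] ![0, 1 / 2] v).Nonempty ↔
      u ∈ stepPattern m '' Iic m ∧ (v = ![false, true] → u = stepPattern m 0) := by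
  constructor
  · rintro ⟨q, hu, hv⟩
    refine ⟨(thresholdCell_nonempty_iff m).1 ⟨q.2, hu⟩, fun hFT => ?_⟩
    -- left of `x = 0` and right of `x - y = 1 / 2` forces `y < -1 / 2`, below every horizontal
    subst hFT
    rw [mem_signCell_crossing] at hv
    simp only [Matrix.cons_val_zero, Matrix.cons_val_one, Bool.false_eq_true, if_false, if_true] at hv
    rw [eq_stepPattern_of_mem_thresholdCell m hu, Nat.ceil_eq_zero.2 (by linarith)]
  · rintro ⟨⟨k, -, rfl⟩, hFT⟩
    obtain ⟨v0, v1, rfl⟩ : ∃ v0 v1, v = ![v0, v1] :=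
      ⟨v 0, v 1, by ext i; fin_cases i <;> rfl⟩
    have hk : (0 : ℝ) ≤ k := k.cast_nonneg
    -- away from `![false, true]`, witnesses at height `k - 1 / 4`, above the crossing `(0, -1 / 2)`
    cases v0 <;> cases v1
    · exact ⟨(-1, k - 1 / 4), mem_thresholdCell_stepPattern m (by linarith) (by linarith),
        by rw [mem_signCell_crossing]; constructor <;> norm_num; linarith⟩
    · rw [hFT rfl]
      exact ⟨(-1 / 8, -3 / 4), mem_thresholdCell_stepPattern m (by norm_num) (by norm_num),
        by rw [mem_signCell_crossing]; norm_num⟩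
    · exact ⟨((k + 1 / 4) / 2, k - 1 / 4), mem_thresholdCell_stepPattern m (by linarith)
        (by linarith), by rw [mem_signCell_crossing]; constructor <;> norm_num <;> linarith⟩
    · exact ⟨(k + 1, k - 1 / 4), mem_thresholdCell_stepPattern m (by linarith) (by linarith),
        by rw [mem_signCell_crossing]; constructor <;> norm_num; linarith⟩

/-- `m` horizontal lines and two lines crossing below all of them: the crossing adds one region
to the `3 * (m + 1)` of a grid. -/
theorem crossing_mem_Lset (m : ℕ) : 3 * m + 4 ∈ Lset (m + 2) := by
  set a : Fin m ⊕ Fin 2 → ℝ := Sum.elim (fun _ => 0) ![1, 1]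
  set b : Fin m ⊕ Fin 2 → ℝ := Sum.elim (fun _ => 1) ![0, -1]
  set c : Fin m ⊕ Fin 2 → ℝ := Sum.elim (fun k => (k : ℝ)) ![0, 1 / 2]
  have hab : ∀ i, (a i, b i) ≠ (0, 0) := by
    rintro (k | i)
    · simp [a, b]
    · fin_cases i <;> simp [a, b]
  have hinj : Injective fun i => lineSet (a i) (b i) (c i) := by
    rintro (j | i) (k | i') h <;> have := mul_eq_mul_of_lineSet_eq (hab _) h
    · simp [a, b, c, Fin.ext_iff] at this ⊢
      omega
    · fin_cases i' <;> simp [a, b, c] at this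
    · fin_cases i <;> simp [a, b, c] at this
    · fin_cases i <;> fin_cases i' <;> simp [a, b, c] at this ⊢
  set T := stepPattern m '' Iic m
  have hrealized : realizedSigns a b c = Equiv.sumArrowEquivProdArrow _ _ _ ⁻¹'
      insert (stepPattern m 0, ![false, true]) (T ×ˢ {![false, true]}ᶜ) := by
    ext s
    rw [mem_preimage]
    change _ ↔ (s ∘ Sum.inl, s ∘ Sum.inr) ∈ _
    simp only [realizedSigns, mem_ofPred_eq, a, b, c, signCell_sumElim, signCell_horizontal,
      crossing_cell_nonempty_iff, mem_insert_iff, mem_prod, mem_compl_singleton_iff, Prod.mk.injEq]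
    generalize s ∘ Sum.inl = u
    have h0 : u = stepPattern m 0 → u ∈ T := fun h => h ▸ ⟨0, by simp, rfl⟩
    tauto
  have hcompl : ({![false, true]}ᶜ : Set (Fin 2 → Bool)).ncard = 3 := by
    rw [ncard_compl, ncard_singleton]
    simp
  have hcount := regionCount_iUnion_lineSet a b c
  rw [hrealized, ncard_preimage_of_injective_subset_range (Equiv.injective _) (by simp),
    ncard_insert_of_notMem (by simp), ncard_prod, ncard_image_stepPattern, hcompl] at hcount
  rw [show 3 * m + 4 = (m + 1) * 3 + 1 by ring, ← hcount]
  exact regionCount_mem_Lset finSumFinEquiv.symm _ (fun i => isLine_lineSet (hab i) _) hinj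

section LowerBound

variable {n : ℕ} (a b c : Fin (n + 1) → ℝ)

theorem compl_iUnion_lineSet_succ :
    (⋃ i, lineSet (a i) (b i) (c i))ᶜ =
      (⋃ i : Fin n, lineSet (a i.castSucc) (b i.castSucc) (c i.castSucc))ᶜ ∩
        (lineSet (a (Fin.last n)) (b (Fin.last n)) (c (Fin.last n)))ᶜ := by
  ext p
  simp [Fin.forall_iff_castSucc, and_comm]

theorem lineSigns_mem_realizedSigns_of_mem_signCell_castSucc {u : Fin n → Bool} {p : ℝ × ℝ}
    (hp : p ∈ signCell (a ∘ Fin.castSucc) (b ∘ Fin.castSucc) (c ∘ Fin.castSucc) u)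
    (hpL : p ∉ lineSet (a (Fin.last n)) (b (Fin.last n)) (c (Fin.last n))) :
    lineSigns a b c p ∈ realizedSigns a b c ∧ lineSigns a b c p ∘ Fin.castSucc = u := by
  obtain ⟨hpU, hps⟩ := (mem_signCell_iff _ _ _).1 hp
  refine ⟨⟨p, (mem_signCell_iff a b c).2 ⟨?_, rfl⟩⟩, hps⟩
  rw [compl_iUnion_lineSet_succ]
  exact ⟨hpU, hpL⟩

theorem image_comp_castSucc_realizedSigns (hab : (a (Fin.last n), b (Fin.last n)) ≠ (0, 0)) :
    (· ∘ Fin.castSucc) '' realizedSigns a b c =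
      realizedSigns (a ∘ Fin.castSucc) (b ∘ Fin.castSucc) (c ∘ Fin.castSucc) := by
  apply Subset.antisymm
  · rintro _ ⟨s, ⟨p, hp⟩, rfl⟩
    exact ⟨p, mem_iInter.2 fun i => mem_iInter.1 hp i.castSucc⟩
  · rintro u ⟨q, hq⟩
    by_cases hqL : q ∈ lineSet (a (Fin.last n)) (b (Fin.last n)) (c (Fin.last n))
    · obtain ⟨⟨p, hp, hlt⟩, -⟩ := (isOpen_signCell _ _ _ u).exists_mem_sides_of_mem_lineSet hq hab hqL
      exact ⟨_, lineSigns_mem_realizedSigns_of_mem_signCell_castSucc a b c hp hlt.ne'⟩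
    · exact ⟨_, lineSigns_mem_realizedSigns_of_mem_signCell_castSucc a b c hq hqL⟩

/-- The cell of the first `n` lines through a point of the last line lying on no other line is
split in two by the last line. -/
theorem not_injOn_comp_castSucc_realizedSigns (hab : ∀ i, (a i, b i) ≠ (0, 0))
    (hinj : Injective fun i => lineSet (a i) (b i) (c i)) :
    ¬ InjOn (· ∘ Fin.castSucc) (realizedSigns a b c) := by
  obtain ⟨q, hqL, hqU⟩ := exists_mem_lineSet_forall_notMem (hab (Fin.last n))
    (fun i => hab i.castSucc) (fun i h => (Fin.castSucc_lt_last i).ne (hinj h))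
  have hq : q ∈ signCell (a ∘ Fin.castSucc) (b ∘ Fin.castSucc) (c ∘ Fin.castSucc)
      (lineSigns (a ∘ Fin.castSucc) (b ∘ Fin.castSucc) (c ∘ Fin.castSucc) q) :=
    (mem_signCell_iff _ _ _).2 ⟨by simpa using hqU, rfl⟩
  obtain ⟨⟨p, hp, hpos⟩, ⟨p', hp', hneg⟩⟩ :=
    (isOpen_signCell _ _ _ _).exists_mem_sides_of_mem_lineSet hq (hab _) hqL
  obtain ⟨hs, hπs⟩ := lineSigns_mem_realizedSigns_of_mem_signCell_castSucc a b c hp hpos.ne'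
  obtain ⟨hs', hπs'⟩ := lineSigns_mem_realizedSigns_of_mem_signCell_castSucc a b c hp' hneg.ne
  intro hπ
  have := congrFun (hπ hs hs' (hπs.trans hπs'.symm)) (Fin.last n)
  simp [lineSigns, hpos, hneg.not_gt] at this

theorem ncard_realizedSigns_castSucc_lt (hab : ∀ i, (a i, b i) ≠ (0, 0))
    (hinj : Injective fun i => lineSet (a i) (b i) (c i)) :
    (realizedSigns (a ∘ Fin.castSucc) (b ∘ Fin.castSucc) (c ∘ Fin.castSucc)).ncard <
      (realizedSigns a b c).ncard := by
  rw [← image_comp_castSucc_realizedSigns a b c (hab _)]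
  exact (ncard_image_le (toFinite _)).lt_of_ne fun h =>
    not_injOn_comp_castSucc_realizedSigns a b c hab hinj (injOn_of_ncard_image_eq h)

end LowerBound

theorem succ_le_ncard_realizedSigns : ∀ {n : ℕ} (a b c : Fin n → ℝ),
    (∀ i, (a i, b i) ≠ (0, 0)) → Injective (fun i => lineSet (a i) (b i) (c i)) →
      n + 1 ≤ (realizedSigns a b c).ncard
  | 0, a, b, c, _, _ => (ncard_pos (toFinite _)).2 ⟨Fin.elim0, 0, by simp [signCell]⟩
  | _ + 1, a, b, c, hab, hinj =>
    (succ_le_ncard_realizedSigns _ _ _ (fun _ => hab _) (hinj.comp (Fin.castSucc_injective _))).trans_lt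
      (ncard_realizedSigns_castSucc_lt a b c hab hinj)

/-- For `n ≥ 3`, `Lset n` contains `n+1`, `2n`, `3n-3`, `3n-2`, and `n+1` is its
minimum. -/
theorem stmt14 (n : ℕ) (hn : 3 ≤ n) :
    n + 1 ∈ Lset n ∧ 2 * n ∈ Lset n ∧ 3 * n - 3 ∈ Lset n ∧ 3 * n - 2 ∈ Lset n ∧
      ∀ f ∈ Lset n, n + 1 ≤ f := by
  obtain ⟨m, rfl⟩ : ∃ m, n = m + 3 := ⟨n - 3, by omega⟩
  refine ⟨?_, ?_, ?_, ?_, ?_⟩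
  · simpa [add_comm] using grid_mem_Lset 0 (m + 3)
  · convert grid_mem_Lset 1 (m + 2) using 2
    omega
  · convert grid_mem_Lset 2 (m + 1) using 2 <;> norm_num <;> omega
  · convert crossing_mem_Lset (m + 1) using 2
    omega
  · rintro f ⟨ℓ, hℓ, hinj, rfl⟩
    choose a b c hab hℓ using hℓ
    obtain rfl : ℓ = fun i => lineSet (a i) (b i) (c i) := funext hℓ
    rw [regionCount_iUnion_lineSet]
    exact succ_le_ncard_realizedSigns a b c hab hinj
end
end
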